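/- arXiv:1401.3403 — 5 statements merged into one kernel-verified Lean document; each statement's English description precedes it below -/
import Mathlib

section
/- Let g(t) = (∑_{k=1}^n a_k t^k) - 1 be a polynomial of degree n ≥ 2 with non-negative integer coefficients a_k such that the gcd of {k : a_k ≠ 0} equals 1. Then there exists a real number r₀ with 0 < r₀ < 1 which is a zero of g, and every complex zero z of g with z ≠ r₀ satisfies |z| > r₀. -/
/-!
On `[0, ∞)` the power sum `x ↦ ∑ aₖ xᵏ` is continuous and strictly increasing, from `0` at `x = 0`
to `∑ aₖ ≥ 2` at `x = 1` (the support has a second element besides `n`, since its gcd is `1`), so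
it takes the value `1` at a unique `r₀ ∈ (0, 1)`. For a complex zero `z` the triangle inequality
gives `1 ≤ ∑ aₖ ‖z‖ᵏ`, hence `r₀ ≤ ‖z‖`. If `‖z‖ = r₀` the triangle inequality is an equality, so
every `zᵏ` with `aₖ ≠ 0` is the positive real `r₀ᵏ`; the order of `z / r₀` then divides every
exponent in the support, hence their gcd `1`, and `z = r₀`.
-/

open Finset ComplexOrder

theorem eq_one_of_forall_pow_eq_one_of_gcd_eq_one {M : Type*} [Monoid M] {T : Finset ℕ}
    (hT : T.gcd id = 1) {x : M} (hx : ∀ k ∈ T, x ^ k = 1) : x = 1 :=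
  orderOf_eq_one_iff.mp <| Nat.dvd_one.mp <|
    hT ▸ Finset.dvd_gcd fun k hk ↦ orderOf_dvd_of_pow_eq_one (hx k hk)

theorem exists_mem_ne_of_gcd_eq_one {T : Finset ℕ} (hT : T.gcd id = 1) {n : ℕ} (hn : n ≠ 1) :
    ∃ m ∈ T, m ≠ n := by
  by_contra! h
  exact hn (Nat.dvd_one.mp (hT ▸ Finset.dvd_gcd fun m hm ↦ (h m hm).symm ▸ dvd_rfl))

section PowerSum

variable {s : Finset ℕ} {c : ℕ → ℝ}

theorem strictMonoOn_sum_mul_pow (hc : ∀ k ∈ s, 0 ≤ c k) {m : ℕ} (hm : m ∈ s) (hm0 : m ≠ 0)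
    (hcm : 0 < c m) : StrictMonoOn (fun x : ℝ ↦ ∑ k ∈ s, c k * x ^ k) (Set.Ici 0) := by
  intro x hx y _ hxy
  refine Finset.sum_lt_sum (fun k hk ↦ ?_) ⟨m, hm, ?_⟩
  · exact mul_le_mul_of_nonneg_left (pow_le_pow_left₀ hx hxy.le k) (hc k hk)
  · exact mul_lt_mul_of_pos_left (pow_lt_pow_left₀ hxy hx hm0) hcm

theorem exists_mem_Ioo_sum_mul_pow_eq_one (hs : 0 ∉ s) (h1 : 1 < ∑ k ∈ s, c k) :
    ∃ r ∈ Set.Ioo (0 : ℝ) 1, ∑ k ∈ s, c k * r ^ k = 1 := by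
  have hcont : ContinuousOn (fun x : ℝ ↦ ∑ k ∈ s, c k * x ^ k) (Set.Icc 0 1) := by fun_prop
  refine intermediate_value_Ioo zero_le_one hcont ⟨?_, ?_⟩
  · rw [Finset.sum_eq_zero fun k hk ↦ by rw [zero_pow (ne_of_mem_of_not_mem hk hs), mul_zero]]
    exact one_pos
  · simpa using h1

theorem one_le_sum_mul_norm_pow (hc : ∀ k ∈ s, 0 ≤ c k) {z : ℂ}
    (hz : ∑ k ∈ s, (c k : ℂ) * z ^ k = 1) : 1 ≤ ∑ k ∈ s, c k * ‖z‖ ^ k := by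
  calc (1 : ℝ) = ‖∑ k ∈ s, (c k : ℂ) * z ^ k‖ := by rw [hz, norm_one]
    _ ≤ ∑ k ∈ s, ‖(c k : ℂ) * z ^ k‖ := norm_sum_le _ _
    _ = ∑ k ∈ s, c k * ‖z‖ ^ k := by
      refine Finset.sum_congr rfl fun k hk ↦ ?_
      rw [norm_mul, norm_pow, Complex.norm_real, Real.norm_of_nonneg (hc k hk)]

theorem pow_eq_norm_pow_of_sum_mul_norm_pow_eq_one (hc : ∀ k ∈ s, 0 ≤ c k) {z : ℂ}
    (hz : ∑ k ∈ s, (c k : ℂ) * z ^ k = 1) (hnorm : ∑ k ∈ s, c k * ‖z‖ ^ k = 1)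
    {k : ℕ} (hk : k ∈ s) (hck : c k ≠ 0) : z ^ k = ((‖z‖ ^ k : ℝ) : ℂ) := by
  have hle : ∀ j ∈ s, c j * (z ^ j).re ≤ c j * ‖z‖ ^ j := fun j hj ↦
    mul_le_mul_of_nonneg_left ((Complex.re_le_norm _).trans_eq (norm_pow z j)) (hc j hj)
  have hre : ∑ j ∈ s, c j * (z ^ j).re = 1 := by
    simpa [Complex.re_sum] using congrArg Complex.re hz
  have hterm := (Finset.sum_eq_sum_iff_of_le hle).mp (hre.trans hnorm.symm) k hk
  have hrek : (z ^ k).re = ‖z ^ k‖ := by rw [norm_pow]; exact mul_left_cancel₀ hck hterm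
  have hnonneg : ((0 : ℝ) : ℂ) ≤ z ^ k := by simpa using Complex.re_eq_norm.mp hrek
  rw [Complex.eq_re_of_ofReal_le hnonneg, hrek, norm_pow]

theorem lt_norm_of_sum_mul_pow_eq_one (hc : ∀ k ∈ s, 0 ≤ c k) (hs : 0 ∉ s)
    (hgcd : (s.filter (c · ≠ 0)).gcd id = 1) {r : ℝ} (hr : 0 < r)
    (hroot : ∑ k ∈ s, c k * r ^ k = 1) {z : ℂ} (hz : ∑ k ∈ s, (c k : ℂ) * z ^ k = 1)
    (hzr : z ≠ r) : r < ‖z‖ := by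
  obtain ⟨m, hm⟩ : (s.filter (c · ≠ 0)).Nonempty :=
    Finset.nonempty_iff_ne_empty.2 fun h ↦ by simp [h] at hgcd
  rw [Finset.mem_filter] at hm
  have hmono := strictMonoOn_sum_mul_pow hc hm.1 (ne_of_mem_of_not_mem hm.1 hs)
    ((hc m hm.1).lt_of_ne' hm.2)
  have hle : r ≤ ‖z‖ := (hmono.le_iff_le (Set.mem_Ici.2 hr.le) (Set.mem_Ici.2 (norm_nonneg z))).mp
    (hroot.trans_le (one_le_sum_mul_norm_pow hc hz))
  refine hle.lt_of_ne fun hrz ↦ hzr ?_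
  have hpow : ∀ k ∈ s.filter (c · ≠ 0), (z / r) ^ k = 1 := by
    intro k hk
    rw [Finset.mem_filter] at hk
    rw [div_pow, pow_eq_norm_pow_of_sum_mul_norm_pow_eq_one hc hz (hrz ▸ hroot) hk.1 hk.2, ← hrz,
      Complex.ofReal_pow]
    exact div_self (pow_ne_zero _ (Complex.ofReal_ne_zero.2 hr.ne'))
  exact (div_eq_one_iff_eq (Complex.ofReal_ne_zero.2 hr.ne')).mp
    (eq_one_of_forall_pow_eq_one_of_gcd_eq_one hgcd hpow)

end PowerSum

/-- Komori–Umemoto lemma: g(t) = (∑_{k=1}^n a_k t^k) - 1 with non-negative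
integer coefficients, degree n ≥ 2, gcd of support 1, has a zero r₀ ∈ (0,1)
and every other complex zero has modulus > r₀. -/
theorem stmt_0 (n : ℕ) (hn : 2 ≤ n) (a : ℕ → ℕ) (han : a n ≠ 0)
    (hgcd : ((Finset.Icc 1 n).filter (fun k => a k ≠ 0)).gcd id = 1)
    (g : ℂ → ℂ)
    (hg : ∀ z : ℂ, g z = (∑ k ∈ Finset.Icc 1 n, (a k : ℂ) * z ^ k) - 1) :
    ∃ r₀ : ℝ, 0 < r₀ ∧ r₀ < 1 ∧ g r₀ = 0 ∧
      ∀ z : ℂ, g z = 0 → z ≠ (r₀ : ℂ) → r₀ < ‖z‖ := by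
  set c : ℕ → ℝ := fun k ↦ a k
  have hc : ∀ k ∈ Icc 1 n, 0 ≤ c k := fun k _ ↦ Nat.cast_nonneg _
  have hs : 0 ∉ Icc 1 n := by simp
  have hn_mem : n ∈ (Icc 1 n).filter (a · ≠ 0) :=
    Finset.mem_filter.2 ⟨Finset.mem_Icc.2 ⟨by omega, le_rfl⟩, han⟩
  obtain ⟨m, hm, hmn⟩ := exists_mem_ne_of_gcd_eq_one hgcd (by omega : n ≠ 1)
  have hsum : 1 < ∑ k ∈ Icc 1 n, c k := by
    have hpos : ∀ k ∈ (Icc 1 n).filter (a · ≠ 0), 1 ≤ c k := fun k hk ↦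
      Nat.one_le_cast.2 (Nat.pos_of_ne_zero (Finset.mem_filter.1 hk).2)
    linarith [hpos m hm, hpos n hn_mem, Finset.add_le_sum hc (Finset.mem_filter.1 hm).1
      (Finset.mem_filter.1 hn_mem).1 hmn]
  obtain ⟨r, ⟨hr0, hr1⟩, hroot⟩ := exists_mem_Ioo_sum_mul_pow_eq_one hs hsum
  have hg' : ∀ z, g z = ∑ k ∈ Icc 1 n, (c k : ℂ) * z ^ k - 1 := by simpa [c] using hg
  refine ⟨r, hr0, hr1, ?_, fun z hz hzr ↦ ?_⟩
  · rw [hg', sub_eq_zero]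
    exact_mod_cast hroot
  · rw [hg', sub_eq_zero] at hz
    exact lt_norm_of_sum_mul_pow_eq_one hc hs (by simpa [c] using hgcd) hr0 hroot hz hzr
end

section
/- For the infinite cyclic group ℤ with generating set {1, p} where p = 2n+1 is odd, every element g has a unique expression g = i·p + j with -n ≤ j ≤ n, and the word length of g equals |i| + |j|. -/
/-- Word length on `ℤ` with respect to a (symmetrized) generating set `S`. -/
noncomputable def wordLengthZ (S : Set ℤ) (g : ℤ) : ℕ :=
  sInf {n : ℕ | ∃ w : List ℤ, w.length = n ∧ (∀ x ∈ w, x ∈ S ∨ -x ∈ S) ∧ w.sum = g}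

/-! Write `g = i * p + j` with `2 |j| < p`; the word `p^i 1^j` has length `|i| + |j|`.
Conversely, a word of length `m` in `±1, ±p` sums to some `u * p + v` with `|u| + |v| ≤ m`.
If `u ≠ i` then `|v| ≥ |u - i| p - |j|`, and since `2 |j| ≤ p - 1` this costs more than the
at most `|u - i|` that `|u|` can save over `|i|`. -/

section WordLength

variable {S : Set ℤ} {g : ℤ}

lemma wordLengthZ_le {w : List ℤ} (hw : ∀ x ∈ w, x ∈ S ∨ -x ∈ S) (hsum : w.sum = g) :
    wordLengthZ S g ≤ w.length :=
  Nat.sInf_le ⟨w, rfl, hw, hsum⟩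

lemma wordLengthZ_eq_of_forall_le {w : List ℤ} (hw : ∀ x ∈ w, x ∈ S ∨ -x ∈ S)
    (hsum : w.sum = g)
    (hmin : ∀ w' : List ℤ, (∀ x ∈ w', x ∈ S ∨ -x ∈ S) → w'.sum = g → w.length ≤ w'.length) :
    wordLengthZ S g = w.length := by
  refine le_antisymm (wordLengthZ_le hw hsum) (le_csInf ⟨_, w, rfl, hw, hsum⟩ ?_)
  rintro m ⟨w', rfl, hw', hsum'⟩
  exact hmin w' hw' hsum'

lemma exists_word_sum_eq_mul {x : ℤ} (hx : x ∈ S ∨ -x ∈ S) (k : ℤ) :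
    ∃ w : List ℤ, w.length = k.natAbs ∧ (∀ y ∈ w, y ∈ S ∨ -y ∈ S) ∧ w.sum = k * x := by
  refine ⟨List.replicate k.natAbs (k.sign * x), List.length_replicate, ?_, ?_⟩
  · intro y hy
    obtain ⟨hk, rfl⟩ := List.mem_replicate.mp hy
    rcases lt_trichotomy k 0 with hneg | hzero | hpos
    · simpa [Int.sign_eq_neg_one_of_neg hneg] using hx.symm
    · simp [hzero] at hk
    · simpa [Int.sign_eq_one_of_pos hpos] using hx
  · rw [List.sum_replicate, nsmul_eq_mul, ← mul_assoc, mul_comm (k.natAbs : ℤ),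
      Int.sign_mul_natAbs]

end WordLength

section GeneratorsOneAndP

variable {p : ℤ}

lemma exists_mul_add_of_generator {x : ℤ}
    (hx : x ∈ ({1, p} : Set ℤ) ∨ -x ∈ ({1, p} : Set ℤ)) :
    ∃ a b : ℤ, x = a * p + b ∧ a.natAbs + b.natAbs = 1 := by
  simp only [Set.mem_insert_iff, Set.mem_singleton_iff, neg_eq_iff_eq_neg] at hx
  rcases hx with (rfl | rfl) | (rfl | rfl)
  · exact ⟨0, 1, by ring, rfl⟩
  · exact ⟨1, 0, by ring, rfl⟩
  · exact ⟨0, -1, by ring, rfl⟩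
  · exact ⟨-1, 0, by ring, rfl⟩

lemma exists_sum_eq_mul_add {w : List ℤ}
    (hw : ∀ x ∈ w, x ∈ ({1, p} : Set ℤ) ∨ -x ∈ ({1, p} : Set ℤ)) :
    ∃ u v : ℤ, w.sum = u * p + v ∧ u.natAbs + v.natAbs ≤ w.length := by
  induction w with
  | nil => exact ⟨0, 0, by simp, by simp⟩
  | cons x w ih =>
    obtain ⟨u, v, hsum, hlen⟩ := ih fun y hy => hw y (List.mem_cons_of_mem x hy)
    obtain ⟨a, b, rfl, hab⟩ := exists_mul_add_of_generator (hw x List.mem_cons_self)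
    refine ⟨a + u, b + v, by rw [List.sum_cons, hsum]; ring, ?_⟩
    have := Int.natAbs_add_le a u
    have := Int.natAbs_add_le b v
    simp only [List.length_cons]
    omega

lemma mul_add_inj_of_two_mul_natAbs_lt {i₁ j₁ i₂ j₂ : ℤ} (h : i₁ * p + j₁ = i₂ * p + j₂)
    (hj₁ : 2 * j₁.natAbs < p) (hj₂ : 2 * j₂.natAbs < p) : i₁ = i₂ ∧ j₁ = j₂ := by
  have hdvd : p ∣ j₂ - j₁ := ⟨i₁ - i₂, by linear_combination -h⟩
  have hj : j₂ - j₁ = 0 := Int.eq_zero_of_abs_lt_dvd hdvd (abs_lt.mpr ⟨by omega, by omega⟩)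
  have hp : p ≠ 0 := by omega
  exact ⟨mul_right_cancel₀ hp (by linarith), by linarith⟩

lemma natAbs_add_natAbs_le_of_mul_add_eq {i j u v : ℤ} (h : i * p + j = u * p + v)
    (hj : 2 * j.natAbs < p) : i.natAbs + j.natAbs ≤ u.natAbs + v.natAbs := by
  by_cases hk : i - u = 0
  · obtain rfl : i = u := by omega
    obtain rfl : j = v := by linarith
    rfl
  zify
  simp only [Int.natCast_natAbs] at hj ⊢
  have hk1 : 1 ≤ |i - u| := Int.one_le_abs hk
  have hi : |i| ≤ |u| + |i - u| := by simpa using abs_add_le u (i - u)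
  have hv : |i - u| * p ≤ |v| + |j| := by
    have hp : 0 ≤ p := by linarith [abs_nonneg j]
    rw [← abs_of_nonneg hp, ← abs_mul, show (i - u) * p = v - j by linear_combination h]
    exact abs_sub v j
  nlinarith [mul_nonneg (sub_nonneg.mpr hk1) (show (0 : ℤ) ≤ p - 1 by linarith [abs_nonneg j])]

lemma wordLengthZ_mul_add {i j : ℤ} (hj : 2 * j.natAbs < p) :
    wordLengthZ {1, p} (i * p + j) = i.natAbs + j.natAbs := by
  obtain ⟨wi, hwi_len, hwi, hwi_sum⟩ := exists_word_sum_eq_mul (S := {1, p}) (x := p) (by simp) i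
  obtain ⟨wj, hwj_len, hwj, hwj_sum⟩ := exists_word_sum_eq_mul (S := {1, p}) (x := 1) (by simp) j
  have hw : ∀ x ∈ wi ++ wj, x ∈ ({1, p} : Set ℤ) ∨ -x ∈ ({1, p} : Set ℤ) := by
    simpa only [List.mem_append, or_imp, forall_and] using ⟨hwi, hwj⟩
  rw [← hwi_len, ← hwj_len, ← List.length_append]
  refine wordLengthZ_eq_of_forall_le hw (by simp [hwi_sum, hwj_sum]) fun w hw' hsum => ?_
  obtain ⟨u, v, huv, hlen⟩ := exists_sum_eq_mul_add hw'
  have := natAbs_add_natAbs_le_of_mul_add_eq (huv.symm.trans hsum).symm hj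
  simp only [List.length_append]
  omega

end GeneratorsOneAndP

lemma exists_balanced_mul_add (n : ℕ) (g : ℤ) :
    ∃ i j : ℤ, g = i * (2 * n + 1) + j ∧ j.natAbs ≤ n := by
  have hp : (0 : ℤ) < 2 * n + 1 := by positivity
  refine ⟨(g + n) / (2 * n + 1), (g + n) % (2 * n + 1) - n, ?_, ?_⟩
  · linarith [Int.mul_ediv_add_emod (g + n) (2 * n + 1)]
  · have := Int.emod_nonneg (g + n) hp.ne'
    have := Int.emod_lt_of_pos (g + n) hp
    omega

theorem stmt_7_general (n : ℕ) (g : ℤ) :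
    (∃! ij : ℤ × ℤ, g = ij.1 * (2 * n + 1) + ij.2 ∧ ij.2.natAbs ≤ n) ∧
    ∀ i j : ℤ, g = i * (2 * n + 1) + j → j.natAbs ≤ n →
      wordLengthZ {1, (2 * (n : ℤ) + 1)} g = i.natAbs + j.natAbs := by
  refine ⟨?_, fun i j hg hj => hg ▸ wordLengthZ_mul_add (by omega)⟩
  obtain ⟨i, j, hg, hj⟩ := exists_balanced_mul_add n g
  refine ⟨(i, j), ⟨hg, hj⟩, fun ⟨i', j'⟩ ⟨hg', hj'⟩ => ?_⟩
  obtain ⟨rfl, rfl⟩ := mul_add_inj_of_two_mul_natAbs_lt (hg'.symm.trans hg) (by omega) (by omega)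
  rfl

/-- For `ℤ` with generating set `{1, p}`, `p = 2n+1` odd, every element `g`
has a unique expression `g = i·p + j` with `-n ≤ j ≤ n`, and for this
expression the word length of `g` equals `|i| + |j|`. -/
theorem stmt_7 (n : ℕ) (hn : 1 ≤ n) (g : ℤ) :
    (∃! ij : ℤ × ℤ, g = ij.1 * (2 * n + 1) + ij.2 ∧ ij.2.natAbs ≤ n) ∧
    ∀ i j : ℤ, g = i * (2 * n + 1) + j → j.natAbs ≤ n →
      wordLengthZ {1, (2 * (n : ℤ) + 1)} g = i.natAbs + j.natAbs :=
  stmt_7_general n g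
end

section
/- For the infinite cyclic group ℤ with generating set S = {1, p} where p = 2n is even, the word length of g = i·p + j (with -n < j ≤ n when i ≥ 0, and -n ≤ j < n when i < 0, j chosen with |j| ≤ n) equals |i| + |j|; equivalently, l_S(g) = min over all representations g = i·p + j of |i| + |j|. -/
section Words

variable {G : Type*} [AddCommGroup G]

theorem List.exists_sum_eq_zsmul_add_zsmul (a b : G) (w : List G)
    (hw : ∀ x ∈ w, x ∈ ({a, b} : Set G) ∨ -x ∈ ({a, b} : Set G)) :
    ∃ i j : ℤ, w.sum = i • a + j • b ∧ i.natAbs + j.natAbs ≤ w.length := by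
  induction w with
  | nil => exact ⟨0, 0, by simp, by simp⟩
  | cons x w ih =>
    obtain ⟨i, j, hsum, hlen⟩ := ih fun y hy => hw y (List.mem_cons_of_mem _ hy)
    simp only [List.sum_cons, List.length_cons, hsum]
    rcases hw x List.mem_cons_self with (rfl | rfl) | (hx | hx)
    · exact ⟨i + 1, j, by rw [add_zsmul, one_zsmul]; abel, by omega⟩
    · exact ⟨i, j + 1, by rw [add_zsmul, one_zsmul]; abel, by omega⟩
    · rw [neg_eq_iff_eq_neg.mp hx]
      exact ⟨i - 1, j, by rw [sub_zsmul, one_zsmul]; abel, by omega⟩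
    · rw [neg_eq_iff_eq_neg.mp hx]
      exact ⟨i, j - 1, by rw [sub_zsmul, one_zsmul]; abel, by omega⟩

theorem exists_list_sum_eq_zsmul (a : G) (i : ℤ) :
    ∃ w : List G, w.length = i.natAbs ∧ (∀ x ∈ w, x = a ∨ x = -a) ∧ w.sum = i • a := by
  rcases Int.natAbs_eq i with hi | hi
  · refine ⟨List.replicate i.natAbs a, List.length_replicate,
      fun x hx => Or.inl (List.eq_of_mem_replicate hx), ?_⟩
    rw [List.sum_replicate, ← natCast_zsmul, ← hi]
  · refine ⟨List.replicate i.natAbs (-a), List.length_replicate,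
      fun x hx => Or.inr (List.eq_of_mem_replicate hx), ?_⟩
    rw [List.sum_replicate, smul_neg, ← natCast_zsmul, ← neg_zsmul, ← hi]

end Words

theorem wordLengthZ_le_natAbs_add_natAbs (p i j : ℤ) :
    wordLengthZ {1, p} (i * p + j) ≤ i.natAbs + j.natAbs := by
  obtain ⟨u, hu_len, hu, hu_sum⟩ := exists_list_sum_eq_zsmul p i
  obtain ⟨v, hv_len, hv, hv_sum⟩ := exists_list_sum_eq_zsmul (1 : ℤ) j
  refine Nat.sInf_le ⟨u ++ v, by simp [hu_len, hv_len], ?_, ?_⟩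
  · intro x hx
    rcases List.mem_append.mp hx with hx | hx
    · rcases hu x hx with rfl | rfl <;> simp
    · rcases hv x hx with rfl | rfl <;> simp
  · simp [hu_sum, hv_sum]

theorem exists_eq_mul_add_natAbs_add_natAbs_le_wordLengthZ (p g : ℤ) :
    ∃ i j : ℤ, g = i * p + j ∧ i.natAbs + j.natAbs ≤ wordLengthZ {1, p} g := by
  have hne : {n : ℕ | ∃ w : List ℤ, w.length = n ∧
      (∀ x ∈ w, x ∈ ({1, p} : Set ℤ) ∨ -x ∈ ({1, p} : Set ℤ)) ∧ w.sum = g}.Nonempty := by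
    obtain ⟨w, -, hw, hsum⟩ := exists_list_sum_eq_zsmul (1 : ℤ) g
    exact ⟨_, w, rfl, fun x hx => by rcases hw x hx with rfl | rfl <;> simp, by simpa using hsum⟩
  obtain ⟨w, hlen, hw, hsum⟩ := Nat.sInf_mem hne
  obtain ⟨j, i, hij, hle⟩ := w.exists_sum_eq_zsmul_add_zsmul 1 p hw
  refine ⟨i, j, ?_, ?_⟩
  · rw [← hsum, hij, smul_eq_mul, smul_eq_mul, mul_one, add_comm]
  · rw [wordLengthZ, ← hlen]
    omega

theorem stmt_8_general (n : ℕ) (g : ℤ) :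
    wordLengthZ {1, (2 * (n : ℤ))} g =
      sInf {m : ℕ | ∃ i j : ℤ, g = i * (2 * n) + j ∧ m = i.natAbs + j.natAbs} := by
  obtain ⟨i, j, hg, hle⟩ := exists_eq_mul_add_natAbs_add_natAbs_le_wordLengthZ (2 * n) g
  apply le_antisymm
  · refine le_csInf ⟨i.natAbs + j.natAbs, i, j, hg, rfl⟩ ?_
    rintro m ⟨i', j', rfl, rfl⟩
    exact wordLengthZ_le_natAbs_add_natAbs _ i' j'
  · refine le_trans ?_ hle
    exact Nat.sInf_le ⟨i, j, hg, rfl⟩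

/-- For `ℤ` with generating set `{1, p}`, `p = 2n` even, the word length of any
`g` is the minimum of `|i| + |j|` over all representations `g = i·p + j`. -/
theorem stmt_8 (n : ℕ) (hn : 1 ≤ n) (g : ℤ) :
    wordLengthZ {1, (2 * (n : ℤ))} g =
      sInf {m : ℕ | ∃ i j : ℤ, g = i * (2 * n) + j ∧ m = i.natAbs + j.natAbs} :=
  stmt_8_general n g
end

section
/- If g(t) = ∑_{k=1}^n a_k tᵏ − 1 has non-negative integer coefficients with a_n ≠ 0 and g has a unique zero r₀ of minimal modulus with 0 < r₀ < 1, then ω = 1/r₀ is a Perron number. -/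
/-
The reciprocal polynomial of `g` is, up to the unit `-1`, monic with integer coefficients,
and it has `ω = 1/r₀` as a root, so `ω` is an algebraic integer. Every conjugate `z` of `ω`
is a root of that reciprocal polynomial and is nonzero, so `z⁻¹` is a root of `g`; for
`z ≠ ω` the minimality of `r₀` gives `r₀ < ‖z⁻¹‖`, that is `‖z‖ < ω`.
-/

/-- A Perron number: a real algebraic integer `ω > 1` such that all other
roots of its minimal polynomial have modulus strictly less than `ω`. -/
def IsPerron (ω : ℝ) : Prop :=
  1 < ω ∧ IsIntegral ℤ ω ∧
    ∀ z : ℂ, Polynomial.aeval z (minpoly ℚ ω) = 0 → z ≠ (ω : ℂ) →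
      ‖z‖ < ω

open Polynomial

namespace Polynomial

theorem aeval_inv_reverse_eq_zero_iff {R K : Type*} [CommSemiring R] [Field K] [Algebra R K]
    {x : K} (hx : x ≠ 0) (p : R[X]) : aeval x⁻¹ p.reverse = 0 ↔ aeval x p = 0 := by
  let _ := invertibleOfNonzero hx
  simpa only [aeval_def, invOf_eq_inv] using eval₂_reverse_eq_zero_iff (algebraMap R K) x p

theorem monic_C_mul_reverse_of_isUnit_coeff_zero {R : Type*} [CommRing R] [Nontrivial R]
    {p : R[X]} (hp : IsUnit (p.coeff 0)) : (C ((hp.unit⁻¹ : Rˣ) : R) * p.reverse).Monic := by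
  refine monic_C_mul_of_mul_leadingCoeff_eq_one ?_
  rw [reverse_leadingCoeff, trailingCoeff_eq_coeff_zero hp.ne_zero]
  exact hp.val_inv_mul

end Polynomial

theorem isIntegral_inv_of_aeval_eq_zero {R K : Type*} [CommRing R] [Nontrivial R] [Field K]
    [Algebra R K] {p : R[X]} (hp : IsUnit (p.coeff 0)) {x : K} (hx : x ≠ 0)
    (hroot : aeval x p = 0) : IsIntegral R x⁻¹ :=
  ⟨_, monic_C_mul_reverse_of_isUnit_coeff_zero hp, by
    rw [← aeval_def, map_mul, (aeval_inv_reverse_eq_zero_iff hx p).2 hroot, mul_zero]⟩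

theorem isPerron_inv_of_unique_minimal_root {p : ℤ[X]} (hp : IsUnit (p.coeff 0)) {r : ℝ}
    (hr₀ : 0 < r) (hr₁ : r < 1) (hroot : aeval r p = 0)
    (hmin : ∀ z : ℂ, aeval z p = 0 → z ≠ r → r < ‖z‖) : IsPerron r⁻¹ := by
  have hint : IsIntegral ℤ r⁻¹ := isIntegral_inv_of_aeval_eq_zero hp hr₀.ne' hroot
  refine ⟨(one_lt_inv₀ hr₀).2 hr₁, hint, fun z hz hzω => ?_⟩
  have hω : aeval r⁻¹ (p.reverse.map (algebraMap ℤ ℚ)) = 0 := by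
    rw [aeval_map_algebraMap, aeval_inv_reverse_eq_zero_iff hr₀.ne' p]
    exact hroot
  have hz_reverse : aeval z p.reverse = 0 := by
    rw [← aeval_map_algebraMap ℚ]
    exact aeval_eq_zero_of_dvd_aeval_eq_zero (minpoly.dvd ℚ r⁻¹ hω) hz
  have hz0 : z ≠ 0 := by
    rintro rfl
    refine minpoly.coeff_zero_ne_zero (hint.tower_top (A := ℚ)) (inv_ne_zero hr₀.ne') ?_
    rwa [← (algebraMap ℚ ℂ).injective.eq_iff, map_zero, coeff_zero_eq_aeval_zero']
  have hz_inv : aeval z⁻¹ p = 0 := by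
    rwa [← aeval_inv_reverse_eq_zero_iff (inv_ne_zero hz0), inv_inv]
  have hne : z⁻¹ ≠ r := fun h => hzω (by rw [← inv_inv z, h, Complex.ofReal_inv])
  have hlt := hmin _ hz_inv hne
  rw [norm_inv] at hlt
  exact (lt_inv_comm₀ hr₀ (norm_pos_iff.2 hz0)).1 hlt

theorem stmt_15_general (n : ℕ) (a : ℕ → ℕ)
    (g : ℂ → ℂ)
    (hg : ∀ z : ℂ, g z = (∑ k ∈ Finset.Icc 1 n, (a k : ℂ) * z ^ k) - 1)
    (r₀ : ℝ) (hr₀ : 0 < r₀) (hr₁ : r₀ < 1) (hroot : g r₀ = 0)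
    (hmin : ∀ z : ℂ, g z = 0 → z ≠ (r₀ : ℂ) → r₀ < ‖z‖) :
    IsPerron (1 / r₀) := by
  set p : ℤ[X] := ∑ k ∈ Finset.Icc 1 n, C (a k : ℤ) * X ^ k - 1
  have hg_aeval (z : ℂ) : g z = aeval z p := by simp [p, hg]
  have hp : p.coeff 0 = -1 := by simp [p]
  have hroot_real : aeval r₀ p = 0 := by
    rwa [hg_aeval, ← Complex.coe_algebraMap, aeval_algebraMap_apply, Complex.coe_algebraMap,
      Complex.ofReal_eq_zero] at hroot
  rw [one_div]
  exact isPerron_inv_of_unique_minimal_root (hp ▸ isUnit_one.neg) hr₀ hr₁ hroot_real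
    fun z hz hzr => hmin z (by rwa [hg_aeval]) hzr

/-- If `g(t) = ∑_{k=1}^n a_k t^k − 1` has non-negative integer coefficients
with `a_n ≠ 0`, and `g` has a zero `r₀ ∈ (0,1)` that is the unique zero of
minimal modulus, then `ω = 1/r₀` is a Perron number. -/
theorem stmt_15 (n : ℕ) (hn : 1 ≤ n) (a : ℕ → ℕ) (han : a n ≠ 0)
    (g : ℂ → ℂ)
    (hg : ∀ z : ℂ, g z = (∑ k ∈ Finset.Icc 1 n, (a k : ℂ) * z ^ k) - 1)
    (r₀ : ℝ) (hr₀ : 0 < r₀) (hr₁ : r₀ < 1) (hroot : g r₀ = 0)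
    (hmin : ∀ z : ℂ, g z = 0 → z ≠ (r₀ : ℂ) → r₀ < ‖z‖) :
    IsPerron (1 / r₀) :=
  stmt_15_general n a g hg r₀ hr₀ hr₁ hroot hmin
end

section
/- Let p, q > 1 and let T'_{p,q} = ⟨x, y, z | x^p = y^q = z⟩. The natural quotient map T'_{p,q} → ℤ/p * ℤ/q (sending z to the identity) has kernel equal to the center, which is the infinite cyclic group generated by z. -/
/-!
`z = x^p = y^q` commutes with both generators, so it is central. The free product of two
nontrivial groups has trivial center, hence the center of `T'_{p,q}` lies in the kernel of the
surjection onto `ℤ/p ∗ ℤ/q`. That kernel is `⟨z⟩`, because `ℤ/p ∗ ℤ/q` maps back onto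
`T'_{p,q}/⟨z⟩`. Finally `x, y, z ↦ q, p, pq` defines a map to `ℤ` showing that `z` has
infinite order.
-/

open Monoid

/-- Relations of `T'_{p,q} = ⟨x, y, z | x^p = y^q = z⟩`. -/
def torusRels (p q : ℕ) : Set (FreeGroup (Fin 3)) :=
  {FreeGroup.of 0 ^ p * (FreeGroup.of 2)⁻¹, FreeGroup.of 1 ^ q * (FreeGroup.of 2)⁻¹}

theorem Subgroup.center_le_ker_of_surjective {G H : Type*} [Group G] [Group H] {f : G →* H}
    (hf : Function.Surjective f) (hH : Subgroup.center H = ⊥) : Subgroup.center G ≤ f.ker := by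
  intro g hg
  rw [MonoidHom.mem_ker, ← Subgroup.mem_bot, ← hH, Subgroup.mem_center_iff]
  intro c
  obtain ⟨a, rfl⟩ := hf c
  rw [← map_mul, ← map_mul, Subgroup.mem_center_iff.1 hg a]

theorem Subgroup.normal_of_le_center {G : Type*} [Group G] {H : Subgroup G}
    (hH : H ≤ Subgroup.center G) : H.Normal where
  conj_mem n hn g := by rwa [Subgroup.mem_center_iff.1 (hH hn) g, mul_inv_cancel_right]

section ZModHom

variable {G : Type*} [Group G]

def zmodPowersHom (n : ℕ) (g : G) (hg : g ^ n = 1) : Multiplicative (ZMod n) →* G :=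
  AddMonoidHom.toMultiplicativeLeft <| ZMod.lift n
    ⟨zmultiplesHom _ (Additive.ofMul g), by
      simp only [zmultiplesHom_apply, natCast_zsmul, ← ofMul_pow, hg, ofMul_one]⟩

@[simp]
theorem zmodPowersHom_ofAdd_one (n : ℕ) (g : G) (hg : g ^ n = 1) :
    zmodPowersHom n g hg (Multiplicative.ofAdd 1) = g := by
  simpa [zmodPowersHom] using congrArg Additive.toMul (ZMod.lift_coe n
    ⟨zmultiplesHom _ (Additive.ofMul g), _⟩ 1)

end ZModHom

theorem Multiplicative.ofAdd_one_pow_self (n : ℕ) :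
    Multiplicative.ofAdd (1 : ZMod n) ^ n = 1 := by
  simp [← ofAdd_nsmul]

theorem Multiplicative.exists_ofAdd_one_zpow_eq {n : ℕ} (m : Multiplicative (ZMod n)) :
    ∃ k : ℤ, Multiplicative.ofAdd (1 : ZMod n) ^ k = m := by
  obtain ⟨k, hk⟩ := ZMod.intCast_surjective (Multiplicative.toAdd m)
  exact ⟨k, by rw [← ofAdd_zsmul, zsmul_one, hk, ofAdd_toAdd]⟩

namespace Monoid.CoprodI

variable {ι : Type*} {G : ι → Type*} [∀ i, Group (G i)]

namespace NeWord

@[simp]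
theorem length_toList_inv {i j : ι} (w : NeWord G i j) :
    w.inv.toList.length = w.toList.length := by
  induction w <;> simp [inv, *, add_comm]

theorem toList_eq_of_prod_eq {i j k l : ι} {w : NeWord G i j} {w' : NeWord G k l}
    (h : w.prod = w'.prod) : w.toList = w'.toList := by
  classical
  exact congrArg Word.toList (Word.equiv.symm.injective h)

theorem exists_prod_eq {x : CoprodI G} (hx : x ≠ 1) :
    ∃ (i j : ι) (w : NeWord G i j), w.prod = x := by
  classical
  have hw : Word.equiv x ≠ Word.empty := fun h => hx <| by
    rw [← Word.equiv.symm_apply_apply x, h]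
    rfl
  obtain ⟨i, j, w, hw⟩ := of_word _ hw
  exact ⟨i, j, w, by rw [prod, hw]; exact Word.equiv.symm_apply_apply x⟩

end NeWord

/- A reduced word `w` from `G i` to `G i` is conjugated by a letter `t` of another factor to the
longer reduced word `t w t⁻¹`; a reduced word from `G i` to `G j ≠ G i` conjugates a letter `t` of
`G i` to the longer reduced word `w t w⁻¹`. -/
theorem center_eq_bot [Nontrivial ι] [∀ i, Nontrivial (G i)] : Subgroup.center (CoprodI G) = ⊥ := by
  classical
  refine (Subgroup.eq_bot_iff_forall _).2 fun x hx => ?_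
  by_contra hx1
  obtain ⟨i, j, w, rfl⟩ := NeWord.exists_prod_eq hx1
  have hlen := List.length_pos_of_ne_nil w.toList_ne_nil
  by_cases hij : i = j
  · subst hij
    obtain ⟨k, hki⟩ := exists_ne i
    obtain ⟨t, ht⟩ := exists_ne (1 : G k)
    let u := NeWord.append (.singleton t ht) hki
      (NeWord.append w hki.symm (.singleton t⁻¹ (inv_ne_one.2 ht)))
    have hu : u.prod = w.prod := by
      simp only [u, NeWord.append_prod, NeWord.prod_singleton, ← mul_assoc,
        Subgroup.mem_center_iff.1 hx, map_inv, mul_inv_cancel_right]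
    have := congrArg List.length (NeWord.toList_eq_of_prod_eq hu)
    simp [u] at this
    omega
  · obtain ⟨t, ht⟩ := exists_ne (1 : G i)
    let u := NeWord.append w (Ne.symm hij) (NeWord.append (.singleton t ht) hij w.inv)
    have hu : u.prod = (NeWord.singleton t ht).prod := by
      simp only [u, NeWord.append_prod, NeWord.inv_prod, NeWord.prod_singleton]
      rw [← mul_assoc, ← Subgroup.mem_center_iff.1 hx, mul_inv_cancel_right]
    have := congrArg List.length (NeWord.toList_eq_of_prod_eq hu)
    simp [u] at this
    omega

end Monoid.CoprodI

namespace Monoid.Coprod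

universe u

variable {M N : Type u} [Group M] [Group N]

instance : ∀ b, Group (cond b M N) := fun b => b.rec ‹Group N› ‹Group M›

def mulEquivCoprodI : M ∗ N ≃* CoprodI (fun b => cond b M N) :=
  MonoidHom.toMulEquiv
    (lift (CoprodI.of (M := fun b => cond b M N) (i := true))
      (CoprodI.of (M := fun b => cond b M N) (i := false)))
    (CoprodI.lift fun b => b.rec (motive := fun b => cond b M N →* M ∗ N) inr inl)
    (hom_ext (by ext; simp) (by ext; simp))
    (CoprodI.ext_hom _ _ fun b => by cases b <;> ext <;> simp)

theorem center_eq_bot [Nontrivial M] [Nontrivial N] : Subgroup.center (M ∗ N) = ⊥ := by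
  have : ∀ b, Nontrivial (cond b M N) := fun b => b.rec ‹Nontrivial N› ‹Nontrivial M›
  have := Subgroup.center_le_ker_of_surjective (f := mulEquivCoprodI.toMonoidHom)
    mulEquivCoprodI.surjective (CoprodI.center_eq_bot (G := fun b => cond b M N))
  rwa [MonoidHom.ker_eq_bot mulEquivCoprodI.toMonoidHom mulEquivCoprodI.injective,
    le_bot_iff] at this

end Monoid.Coprod


namespace torusRels

variable {p q : ℕ}

theorem lift_eq_one {G : Type*} [Group G] {f : Fin 3 → G} (h0 : f 0 ^ p = f 2)
    (h1 : f 1 ^ q = f 2) : ∀ r ∈ torusRels p q, FreeGroup.lift f r = 1 := by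
  rintro r (rfl | rfl) <;> simp [h0, h1]

theorem of_zero_pow : (PresentedGroup.of 0 : PresentedGroup (torusRels p q)) ^ p = .of 2 := by
  have h := PresentedGroup.mk_eq_mk_of_mul_inv_mem (rels := torusRels p q) (Set.mem_insert _ _)
  rwa [map_pow] at h

theorem of_one_pow : (PresentedGroup.of 1 : PresentedGroup (torusRels p q)) ^ q = .of 2 := by
  have h := PresentedGroup.mk_eq_mk_of_mul_inv_mem (rels := torusRels p q)
    (Set.mem_insert_of_mem _ rfl)
  rwa [map_pow] at h

theorem of_two_mem_center :
    (PresentedGroup.of 2 : PresentedGroup (torusRels p q)) ∈ Subgroup.center _ := by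
  refine Subgroup.mem_center_iff.2 fun g => Subgroup.mem_centralizer_singleton_iff.1 <|
    PresentedGroup.generated_by _ _ (fun j => ?_) g
  rw [Subgroup.mem_centralizer_singleton_iff]
  fin_cases j
  · exact (of_zero_pow ▸ Commute.self_pow _ p).eq
  · exact (of_one_pow ▸ Commute.self_pow _ q).eq
  · rfl

open Multiplicative in
theorem eq_zero_of_of_two_zpow_eq_one (hp : p ≠ 0) (hq : q ≠ 0) {k : ℤ}
    (hk : (PresentedGroup.of 2 : PresentedGroup (torusRels p q)) ^ k = 1) : k = 0 := by
  let χ := PresentedGroup.toGroup (rels := torusRels p q)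
    (f := ![ofAdd (q : ℤ), ofAdd (p : ℤ), ofAdd ((p : ℤ) * q)])
    (lift_eq_one
      (show ofAdd (q : ℤ) ^ p = ofAdd ((p : ℤ) * q) by rw [← ofAdd_nsmul, nsmul_eq_mul])
      (show ofAdd (p : ℤ) ^ q = ofAdd ((p : ℤ) * q) by rw [← ofAdd_nsmul, nsmul_eq_mul, mul_comm]))
  have h := congrArg (toAdd ∘ χ) hk
  simp [χ] at h
  omega

end torusRels

open Multiplicative in
def torusQuotient (p q : ℕ) :
    PresentedGroup (torusRels p q) →* Coprod (Multiplicative (ZMod p)) (Multiplicative (ZMod q)) :=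
  PresentedGroup.toGroup (f := ![Coprod.inl (ofAdd 1), Coprod.inr (ofAdd 1), 1])
    (torusRels.lift_eq_one (by simp [← map_pow, ofAdd_one_pow_self])
      (by simp [← map_pow, ofAdd_one_pow_self]))

namespace torusQuotient

variable {p q : ℕ}

@[simp]
theorem of_zero :
    torusQuotient p q (.of 0) = Coprod.inl (Multiplicative.ofAdd 1) :=
  PresentedGroup.toGroup.of _

@[simp]
theorem of_one :
    torusQuotient p q (.of 1) = Coprod.inr (Multiplicative.ofAdd 1) :=
  PresentedGroup.toGroup.of _

@[simp]
theorem of_two : torusQuotient p q (.of 2) = 1 :=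
  PresentedGroup.toGroup.of _

theorem surjective : Function.Surjective (torusQuotient p q) := by
  intro c
  induction c using Coprod.induction_on with
  | inl m =>
    obtain ⟨k, rfl⟩ := Multiplicative.exists_ofAdd_one_zpow_eq m
    exact ⟨.of 0 ^ k, by simp⟩
  | inr m =>
    obtain ⟨k, rfl⟩ := Multiplicative.exists_ofAdd_one_zpow_eq m
    exact ⟨.of 1 ^ k, by simp⟩
  | mul a b ha hb =>
    obtain ⟨a, rfl⟩ := ha
    obtain ⟨b, rfl⟩ := hb
    exact ⟨a * b, map_mul _ _ _⟩

theorem ker_eq_zpowers : (torusQuotient p q).ker = Subgroup.zpowers (.of 2) := by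
  let N := Subgroup.zpowers (PresentedGroup.of 2 : PresentedGroup (torusRels p q))
  have : N.Normal :=
    Subgroup.normal_of_le_center (Subgroup.zpowers_le.2 torusRels.of_two_mem_center)
  have hz : (QuotientGroup.mk (.of 2) : PresentedGroup (torusRels p q) ⧸ N) = 1 :=
    (QuotientGroup.eq_one_iff _).2 (Subgroup.mem_zpowers _)
  let ψ := Coprod.lift
    (zmodPowersHom p (QuotientGroup.mk (.of 0) : _ ⧸ N) (by rw [← QuotientGroup.mk_pow,
      torusRels.of_zero_pow, hz]))
    (zmodPowersHom q (QuotientGroup.mk (.of 1) : _ ⧸ N) (by rw [← QuotientGroup.mk_pow,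
      torusRels.of_one_pow, hz]))
  have hψ : ψ.comp (torusQuotient p q) = QuotientGroup.mk' N := by
    refine PresentedGroup.ext fun j => ?_
    fin_cases j
    · simp [ψ]
    · simp [ψ]
    · simp [hz]
  refine le_antisymm (fun g hg => ?_) (Subgroup.zpowers_le.2 of_two)
  refine (QuotientGroup.eq_one_iff (N := N) g).1 ?_
  rw [← QuotientGroup.mk'_apply, ← hψ, MonoidHom.comp_apply, hg, map_one]

end torusQuotient

/-- The natural quotient map `T'_{p,q} → ℤ/p ∗ ℤ/q` (sending `x`, `y` to the
generators and `z` to the identity) exists, and its kernel equals the center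
of `T'_{p,q}`, which is the (infinite) cyclic subgroup generated by `z`. -/
theorem stmt_17 (p q : ℕ) (hp : 1 < p) (hq : 1 < q) :
    ∃ φ : PresentedGroup (torusRels p q) →*
        Coprod (Multiplicative (ZMod p)) (Multiplicative (ZMod q)),
      φ (PresentedGroup.of 0) = Coprod.inl (Multiplicative.ofAdd (1 : ZMod p)) ∧
      φ (PresentedGroup.of 1) = Coprod.inr (Multiplicative.ofAdd (1 : ZMod q)) ∧
      φ (PresentedGroup.of 2) = 1 ∧
      Function.Surjective φ ∧
      φ.ker = Subgroup.center (PresentedGroup (torusRels p q)) ∧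
      Subgroup.center (PresentedGroup (torusRels p q)) =
        Subgroup.zpowers (PresentedGroup.of 2) ∧
      ∀ k : ℤ, (PresentedGroup.of (2 : Fin 3) : PresentedGroup (torusRels p q)) ^ k = 1 →
        k = 0 := by
  have : Fact (1 < p) := ⟨hp⟩
  have : Fact (1 < q) := ⟨hq⟩
  have hcenter : Subgroup.center (PresentedGroup (torusRels p q)) = .zpowers (.of 2) :=
    le_antisymm
      (torusQuotient.ker_eq_zpowers ▸ Subgroup.center_le_ker_of_surjective
        torusQuotient.surjective Coprod.center_eq_bot)
      (Subgroup.zpowers_le.2 torusRels.of_two_mem_center)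
  exact ⟨torusQuotient p q, torusQuotient.of_zero, torusQuotient.of_one, torusQuotient.of_two,
    torusQuotient.surjective, torusQuotient.ker_eq_zpowers.trans hcenter.symm, hcenter,
    fun _ => torusRels.eq_zero_of_of_two_zpow_eq_one (by omega) (by omega)⟩
end
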